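/- For a rank-m tensor T = Σ_{j=1}^m a_j⊗b_j⊗c_j with {a_j}, {b_j}, {c_j} each a basis (i.e., T ≅ M_{⟨1⟩}^{⊕m}, the unit tensor), the symmetry Lie algebra ĝ_T = {(X,Y,Z) ∈ gl(A)⊕gl(B)⊕gl(C) : X.T + Y.T + Z.T = 0} has dimension 2m. -/

import Mathlib

/-!
Writing the three bases as the columns of invertible matrices `P`, `Q`, `R`, the tensor is
`(P ⊗ Q ⊗ R)` applied to the unit tensor. The derivation action is equivariant:
`(X, Y, Z).((P ⊗ Q ⊗ R) T) = (P ⊗ Q ⊗ R) ((P⁻¹XP, Q⁻¹YQ, R⁻¹ZR).T)`, so the symmetry algebra of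
`(P ⊗ Q ⊗ R) T` is a conjugate of that of `T`. For the unit tensor the `eᵢ ⊗ eⱼ ⊗ eₖ`-coefficient
of `X.T + Y.T + Z.T` is `Xᵢⱼ δⱼₖ + Yⱼᵢ δᵢₖ + Zₖᵢ δᵢⱼ`, which vanishes for all `i, j, k` exactly when
`X`, `Y`, `Z` are diagonal with `X + Y + Z = 0`: a space of dimension `2m`.
-/

/-- The linear action `X ↦ (X⊗Id⊗Id)T` of `gl(A)` on `A⊗B⊗C`. -/
noncomputable def actA {m : ℕ} (T : Fin m → Fin m → Fin m → ℂ) :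
    Matrix (Fin m) (Fin m) ℂ →ₗ[ℂ] (Fin m → Fin m → Fin m → ℂ) where
  toFun X := fun i j k => ∑ i', X i i' * T i' j k
  map_add' X Y := by funext i j k; simp [add_mul, Finset.sum_add_distrib]
  map_smul' c X := by
    funext i j k
    simp [Matrix.smul_apply, smul_eq_mul, Finset.mul_sum, mul_assoc]

/-- The linear action `Y ↦ (Id⊗Y⊗Id)T`. -/
noncomputable def actB {m : ℕ} (T : Fin m → Fin m → Fin m → ℂ) :
    Matrix (Fin m) (Fin m) ℂ →ₗ[ℂ] (Fin m → Fin m → Fin m → ℂ) where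
  toFun Y := fun i j k => ∑ j', Y j j' * T i j' k
  map_add' X Y := by funext i j k; simp [add_mul, Finset.sum_add_distrib]
  map_smul' c X := by
    funext i j k
    simp [Matrix.smul_apply, smul_eq_mul, Finset.mul_sum, mul_assoc]

/-- The linear action `Z ↦ (Id⊗Id⊗Z)T`. -/
noncomputable def actC {m : ℕ} (T : Fin m → Fin m → Fin m → ℂ) :
    Matrix (Fin m) (Fin m) ℂ →ₗ[ℂ] (Fin m → Fin m → Fin m → ℂ) where
  toFun Z := fun i j k => ∑ k', Z k k' * T i j k'
  map_add' X Y := by funext i j k; simp [add_mul, Finset.sum_add_distrib]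
  map_smul' c X := by
    funext i j k
    simp [Matrix.smul_apply, smul_eq_mul, Finset.mul_sum, mul_assoc]

/-- The symmetry Lie algebra `ĝ_T = {(X,Y,Z) : X.T + Y.T + Z.T = 0}`
as the kernel of the linear map `(X,Y,Z) ↦ X.T + Y.T + Z.T`. -/
noncomputable def symLie {m : ℕ} (T : Fin m → Fin m → Fin m → ℂ) :
    Submodule ℂ (Matrix (Fin m) (Fin m) ℂ ×
      Matrix (Fin m) (Fin m) ℂ × Matrix (Fin m) (Fin m) ℂ) :=
  LinearMap.ker
    ((actA T).comp (LinearMap.fst ℂ _ _) +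
      (actB T).comp ((LinearMap.fst ℂ _ _).comp (LinearMap.snd ℂ _ _)) +
      (actC T).comp ((LinearMap.snd ℂ _ _).comp (LinearMap.snd ℂ _ _)))

open Matrix

section

variable {m : ℕ}

local notation "Mat" => Matrix (Fin m) (Fin m) ℂ

local notation "Ten" => Fin m → Fin m → Fin m → ℂ

section ModeProducts

variable (T : Fin m → Fin m → Fin m → ℂ)

@[simp] lemma actA_apply (X : Mat) (i j k : Fin m) :
    actA T X i j k = ∑ i', X i i' * T i' j k := rfl

@[simp] lemma actB_apply (Y : Mat) (i j k : Fin m) :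
    actB T Y i j k = ∑ j', Y j j' * T i j' k := rfl

@[simp] lemma actC_apply (Z : Mat) (i j k : Fin m) :
    actC T Z i j k = ∑ k', Z k k' * T i j k' := rfl

lemma actA_actA (P X : Mat) : actA (actA T P) X = actA T (X * P) := by
  funext i j k
  simp only [actA_apply, mul_apply, Finset.mul_sum, Finset.sum_mul, mul_assoc]
  exact Finset.sum_comm

lemma actB_actB (Q Y : Mat) : actB (actB T Q) Y = actB T (Y * Q) := by
  funext i j k
  simp only [actB_apply, mul_apply, Finset.mul_sum, Finset.sum_mul, mul_assoc]
  exact Finset.sum_comm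

lemma actC_actC (R Z : Mat) : actC (actC T R) Z = actC T (Z * R) := by
  funext i j k
  simp only [actC_apply, mul_apply, Finset.mul_sum, Finset.sum_mul, mul_assoc]
  exact Finset.sum_comm

lemma actB_actA (P Y : Mat) : actB (actA T P) Y = actA (actB T Y) P := by
  funext i j k
  simp only [actA_apply, actB_apply, Finset.mul_sum, mul_left_comm]
  exact Finset.sum_comm

lemma actC_actA (P Z : Mat) : actC (actA T P) Z = actA (actC T Z) P := by
  funext i j k
  simp only [actA_apply, actC_apply, Finset.mul_sum, mul_left_comm]
  exact Finset.sum_comm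

lemma actC_actB (Q Z : Mat) : actC (actB T Q) Z = actB (actC T Z) Q := by
  funext i j k
  simp only [actB_apply, actC_apply, Finset.mul_sum, mul_left_comm]
  exact Finset.sum_comm

lemma actA_one : actA T 1 = T := by
  funext i j k; simp [one_apply]

lemma actB_one : actB T 1 = T := by
  funext i j k; simp [one_apply]

lemma actC_one : actC T 1 = T := by
  funext i j k; simp [one_apply]

end ModeProducts

/-- `T ↦ (P ⊗ Q ⊗ R) T`, using that `actA T P = (P ⊗ Id ⊗ Id) T`. -/
noncomputable def changeBasis (P Q R : Mat) : Ten →ₗ[ℂ] Ten where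
  toFun T := actA (actB (actC T R) Q) P
  map_add' S T := by
    funext i j k
    simp only [actA_apply, actB_apply, actC_apply, Pi.add_apply, mul_add, Finset.sum_add_distrib]
  map_smul' c T := by
    funext i j k
    simp only [actA_apply, actB_apply, actC_apply, Pi.smul_apply, smul_eq_mul, Finset.mul_sum,
      mul_left_comm c, RingHom.id_apply]

lemma changeBasis_apply (P Q R : Mat) (T : Ten) :
    changeBasis P Q R T = actA (actB (actC T R) Q) P := rfl

lemma changeBasis_changeBasis (P Q R P' Q' R' : Mat) (T : Ten) :
    changeBasis P Q R (changeBasis P' Q' R' T) = changeBasis (P * P') (Q * Q') (R * R') T := by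
  simp only [changeBasis_apply, actC_actA, actC_actB, actB_actA, actA_actA, actB_actB, actC_actC]

lemma changeBasis_injective (P Q R : Mat ˣ) : Function.Injective (changeBasis (P : Mat) Q R) :=
  Function.LeftInverse.injective (g := changeBasis (P⁻¹ : Mat ˣ) (Q⁻¹ : Mat ˣ) (R⁻¹ : Mat ˣ))
    fun T => by
      rw [changeBasis_changeBasis, Units.inv_mul, Units.inv_mul, Units.inv_mul, changeBasis_apply,
        actC_one, actB_one, actA_one]

noncomputable def symLieMap (T : Ten) : Mat × Mat × Mat →ₗ[ℂ] Ten :=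
  (actA T).comp (LinearMap.fst ℂ _ _) +
    (actB T).comp ((LinearMap.fst ℂ _ _).comp (LinearMap.snd ℂ _ _)) +
    (actC T).comp ((LinearMap.snd ℂ _ _).comp (LinearMap.snd ℂ _ _))

lemma symLie_eq_ker (T : Ten) : symLie T = LinearMap.ker (symLieMap T) := rfl

lemma symLieMap_apply (T : Ten) (W : Mat × Mat × Mat) :
    symLieMap T W = actA T W.1 + actB T W.2.1 + actC T W.2.2 := rfl

noncomputable def conjTriple (P Q R : Mat ˣ) : (Mat × Mat × Mat) ≃ₗ[ℂ] (Mat × Mat × Mat) :=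
  let conj (u : Mat ˣ) := DistribMulAction.toLinearEquiv ℂ Mat (ConjAct.toConjAct u⁻¹)
  (conj P).prodCongr ((conj Q).prodCongr (conj R))

lemma conjTriple_apply (P Q R : Mat ˣ) (W : Mat × Mat × Mat) :
    conjTriple P Q R W =
      ((P⁻¹ : Mat ˣ) * W.1 * P, (Q⁻¹ : Mat ˣ) * W.2.1 * Q, (R⁻¹ : Mat ˣ) * W.2.2 * R) := by
  simp only [conjTriple, LinearEquiv.prodCongr_apply, DistribMulAction.toLinearEquiv_apply,
    ConjAct.units_smul_def, ConjAct.ofConjAct_toConjAct, inv_inv]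

lemma symLieMap_changeBasis (P Q R : Mat ˣ) (T : Ten) (W : Mat × Mat × Mat) :
    symLieMap (changeBasis (P : Mat) Q R T) W =
      changeBasis (P : Mat) Q R (symLieMap T (conjTriple P Q R W)) := by
  have mul_conj (u : Mat ˣ) (X : Mat) : (u : Mat) * ((u⁻¹ : Mat ˣ) * X * u) = X * u := by
    rw [← mul_assoc, ← mul_assoc, Units.mul_inv, one_mul]
  simp only [symLieMap_apply, conjTriple_apply, map_add, changeBasis_apply, actC_actA, actC_actB,
    actB_actA, actA_actA, actB_actB, actC_actC, mul_conj]

theorem finrank_symLie_changeBasis (P Q R : Mat ˣ) (T : Ten) :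
    Module.finrank ℂ (symLie (changeBasis (P : Mat) Q R T)) = Module.finrank ℂ (symLie T) := by
  have h : symLie (changeBasis (P : Mat) Q R T) =
      (symLie T).comap (conjTriple P Q R).toLinearMap := by
    ext W
    simp only [Submodule.mem_comap, symLie_eq_ker, LinearMap.mem_ker, symLieMap_changeBasis,
      LinearMap.map_eq_zero_iff _ (changeBasis_injective P Q R), LinearEquiv.coe_coe]
  rw [h, Submodule.comap_equiv_eq_map_symm, LinearEquiv.finrank_map_eq]

def unitTensor (m : ℕ) : Fin m → Fin m → Fin m → ℂ := fun i j k => if i = j ∧ j = k then 1 else 0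

lemma changeBasis_unitTensor (P Q R : Mat) :
    changeBasis P Q R (unitTensor m) = fun i j k => ∑ l, P i l * Q j l * R k l := by
  funext i j k
  simp [changeBasis_apply, unitTensor, ite_and, mul_assoc]

lemma symLieMap_unitTensor_apply (W : Mat × Mat × Mat) (i j k : Fin m) :
    symLieMap (unitTensor m) W i j k =
      (if j = k then W.1 i j else 0) + (if i = k then W.2.1 j i else 0) +
        (if i = j then W.2.2 k i else 0) := by
  by_cases hij : i = j
  · subst hij; simp [symLieMap_apply, unitTensor, ite_and, eq_comm]
  · simp [symLieMap_apply, unitTensor, ite_and, eq_comm, hij]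

noncomputable def diagSymLie (m : ℕ) :
    (Fin m → ℂ) × (Fin m → ℂ) →ₗ[ℂ] Matrix (Fin m) (Fin m) ℂ × Matrix (Fin m) (Fin m) ℂ ×
      Matrix (Fin m) (Fin m) ℂ :=
  let d := diagonalLinearMap (Fin m) ℂ ℂ
  (d ∘ₗ .fst ℂ _ _).prod ((d ∘ₗ .snd ℂ _ _).prod (d ∘ₗ (-LinearMap.fst ℂ _ _ - .snd ℂ _ _)))

lemma diagSymLie_apply (p : (Fin m → ℂ) × (Fin m → ℂ)) :
    diagSymLie m p = (diagonal p.1, diagonal p.2, diagonal (-p.1 - p.2)) := rfl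

lemma diagSymLie_injective : Function.Injective (diagSymLie m) := fun p q h => by
  simp only [diagSymLie_apply, Prod.mk.injEq, diagonal_eq_diagonal_iff] at h
  exact Prod.ext (funext h.1) (funext h.2.1)

lemma symLie_unitTensor : symLie (unitTensor m) = LinearMap.range (diagSymLie m) := by
  ext W
  constructor
  · intro hW
    rw [symLie_eq_ker, LinearMap.mem_ker] at hW
    have h (i j k : Fin m) : (if j = k then W.1 i j else 0) + (if i = k then W.2.1 j i else 0) +
        (if i = j then W.2.2 k i else 0) = 0 := by
      rw [← symLieMap_unitTensor_apply, hW, Pi.zero_apply, Pi.zero_apply, Pi.zero_apply]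
    refine ⟨(fun i => W.1 i i, fun i => W.2.1 i i), ?_⟩
    refine Prod.ext ?_ (Prod.ext ?_ ?_) <;> ext i j <;> rcases eq_or_ne i j with rfl | hij
    · simp [diagSymLie_apply]
    · simpa [diagSymLie_apply, hij] using (h i j j).symm
    · simp [diagSymLie_apply]
    · simpa [diagSymLie_apply, hij, hij.symm] using (h j i j).symm
    · simp only [diagSymLie_apply, diagonal_apply_eq, Pi.sub_apply, Pi.neg_apply]
      linear_combination -(by simpa using h i i i : W.1 i i + W.2.1 i i + W.2.2 i i = 0)
    · simpa [diagSymLie_apply, hij, hij.symm] using (h j j i).symm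
  · rintro ⟨p, rfl⟩
    rw [symLie_eq_ker, LinearMap.mem_ker]
    funext i j k
    simp only [symLieMap_unitTensor_apply, diagSymLie_apply, diagonal_apply]
    split_ifs <;> subst_vars <;> simp_all

end

/-- For a rank-`m` tensor `T = Σ_{j=1}^m a_j⊗b_j⊗c_j` with `{a_j}`, `{b_j}`,
`{c_j}` each a basis (i.e. `T ≅ M_{⟨1⟩}^{⊕m}`, the unit tensor), the symmetry
Lie algebra `ĝ_T` has dimension `2m`. -/
theorem finrank_symLie_unitTensor (m : ℕ) (a b c : Fin m → Fin m → ℂ)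
    (ha : LinearIndependent ℂ a) (hb : LinearIndependent ℂ b)
    (hc : LinearIndependent ℂ c) :
    Module.finrank ℂ
      ↥(symLie (fun i j k => ∑ l, a l i * b l j * c l k)) = 2 * m := by
  have isUnit_of_linearIndependent {v : Fin m → Fin m → ℂ} (hv : LinearIndependent ℂ v) :
      IsUnit (of v)ᵀ :=
    linearIndependent_cols_iff_isUnit.mp hv
  obtain ⟨P, hP⟩ := isUnit_of_linearIndependent ha
  obtain ⟨Q, hQ⟩ := isUnit_of_linearIndependent hb
  obtain ⟨R, hR⟩ := isUnit_of_linearIndependent hc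
  have hT : (fun i j k => ∑ l, a l i * b l j * c l k) =
      changeBasis (P : Matrix (Fin m) (Fin m) ℂ) Q R (unitTensor m) := by
    rw [changeBasis_unitTensor, hP, hQ, hR]
    rfl
  rw [hT, finrank_symLie_changeBasis, symLie_unitTensor,
    LinearMap.finrank_range_of_inj diagSymLie_injective, Module.finrank_prod,
    Module.finrank_fin_fun]
  ring
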